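/- For nonzero closed convex cones P, Q in ℝⁿ, the min-max value 𝔰(P,Q) := min_{u∈P∩Sₙ} max_{v∈Q∩Sₙ} ⟨u,v⟩ equals −1 if and only if Q = ℝ₊(−ū) := {−αū : α ≥ 0} for some unit vector ū ∈ P∩Sₙ. -/
import Mathlib


open Real Set
open scoped ENNReal

noncomputable section

local notation "⟪" x ", " y "⟫" => @inner ℝ _ _ x y

/-- Euclidean space ℝⁿ. -/
abbrev E (n : ℕ) := EuclideanSpace ℝ (Fin n)

/-- Unit sphere Sₙ in ℝⁿ. -/
def sph (n : ℕ) : Set (E n) := {u | ‖u‖ = 1}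

/-- `P` is a closed convex cone in ℝⁿ. -/
def IsClosedConvexCone {n : ℕ} (P : Set (E n)) : Prop :=
  IsClosed P ∧ Convex ℝ P ∧ ∀ c : ℝ, 0 ≤ c → ∀ x ∈ P, c • x ∈ P

/-- Support function of Q ∩ Sₙ : F_Q(u) = max_{v ∈ Q∩Sₙ} ⟨u,v⟩. -/
def F {n : ℕ} (Q : Set (E n)) (u : E n) : ℝ :=
  sSup ((fun v => ⟪u, v⟫) '' (Q ∩ sph n))

/-- 𝔰(P,Q) := min_{u∈P∩Sₙ} max_{v∈Q∩Sₙ} ⟨u,v⟩ = min_{u∈P∩Sₙ} F_Q(u). -/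
def sval {n : ℕ} (P Q : Set (E n)) : ℝ := sInf (F Q '' (P ∩ sph n))

/-- 𝔰(P,Q) = −1 iff Q is the ray generated by −ū for some ū ∈ P∩Sₙ. -/
theorem sval_eq_neg_one_iff_ray {n : ℕ} (P Q : Set (E n))
    (hP : IsClosedConvexCone P) (hQ : IsClosedConvexCone Q)
    (hPne : (P ∩ sph n).Nonempty) (hQne : (Q ∩ sph n).Nonempty) :
    sval P Q = -1 ↔ ∃ u ∈ P ∩ sph n, Q = {x | ∃ α : ℝ, 0 ≤ α ∧ x = α • (-u)} := by
  obtain ⟨v₀, hv₀Q, hv₀S⟩ := hQne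
  have hsph : sph n = Metric.sphere (0 : E n) 1 := by
    ext u; simp [sph, dist_zero_right]
  have hQScomp : IsCompact (Q ∩ sph n) := by
    rw [hsph]; exact (isCompact_sphere 0 1).inter_left hQ.1
  have hPScomp : IsCompact (P ∩ sph n) := by
    rw [hsph]; exact (isCompact_sphere 0 1).inter_left hP.1
  have hQSne : (Q ∩ sph n).Nonempty := ⟨v₀, hv₀Q, hv₀S⟩
  have hbdd : ∀ u : E n, BddAbove ((fun v => ⟪u, v⟫) '' (Q ∩ sph n)) := fun u =>
    (hQScomp.image (continuous_const.inner continuous_id)).bddAbove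
  have hFlb : ∀ u ∈ sph n, -1 ≤ F Q u := by
    intro u hu
    have h1 : -1 ≤ ⟪u, v₀⟫ := by
      have := real_inner_le_norm (-u) v₀
      rw [inner_neg_left] at this
      have hu' : ‖u‖ = 1 := hu
      have hv' : ‖v₀‖ = 1 := hv₀S
      rw [norm_neg, hu', hv'] at this
      linarith
    exact le_trans h1 (le_csSup (hbdd u) ⟨v₀, ⟨hv₀Q, hv₀S⟩, rfl⟩)
  constructor
  · intro hs
    -- F Q is 1-Lipschitz
    have key : ∀ a b : E n, F Q a ≤ F Q b + ‖a - b‖ := by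
      intro a b
      apply csSup_le (hQSne.image _)
      rintro x ⟨v, hv, rfl⟩
      have h1 : ⟪a, v⟫ = ⟪b, v⟫ + ⟪a - b, v⟫ := by
        rw [inner_sub_left]; ring
      have h2 : ⟪a - b, v⟫ ≤ ‖a - b‖ := by
        have := real_inner_le_norm (a - b) v
        have hv' : ‖v‖ = 1 := hv.2
        rw [hv'] at this; linarith
      have h3 : ⟪b, v⟫ ≤ F Q b := le_csSup (hbdd b) ⟨v, hv, rfl⟩
      linarith
    have hlip : LipschitzWith 1 (F Q) := by
      apply LipschitzWith.of_dist_le_mul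
      intro a b
      rw [Real.dist_eq, dist_eq_norm, NNReal.coe_one, one_mul, abs_sub_le_iff]
      constructor
      · have := key a b; linarith
      · have := key b a; rw [norm_sub_rev] at this; linarith
    obtain ⟨u, huPS, hmin⟩ := hPScomp.exists_isMinOn hPne hlip.continuous.continuousOn
    have hval : F Q u = -1 := by
      have h1 : sval P Q = F Q u := by
        apply le_antisymm
        · exact csInf_le ⟨-1, by rintro x ⟨w, hw, rfl⟩; exact hFlb w hw.2⟩
            ⟨u, huPS, rfl⟩
        · exact le_csInf (hPne.image _) (by rintro x ⟨w, hw, rfl⟩; exact hmin hw)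
      rw [← h1, hs]
    -- all v ∈ Q ∩ sph equal -u
    have hall : ∀ v ∈ Q ∩ sph n, v = -u := by
      intro v hv
      have h1 : ⟪u, v⟫ ≤ -1 := hval ▸ le_csSup (hbdd u) ⟨v, hv, rfl⟩
      have h2 : -1 ≤ ⟪u, v⟫ := by
        have := real_inner_le_norm (-u) v
        rw [inner_neg_left] at this
        have hu' : ‖u‖ = 1 := huPS.2
        have hv' : ‖v‖ = 1 := hv.2
        rw [norm_neg, hu', hv'] at this; linarith
      have h3 : ⟪-u, v⟫ = 1 := by rw [inner_neg_left]; linarith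
      have hnu : ‖(-u : E n)‖ = 1 := by rw [norm_neg]; exact huPS.2
      exact ((inner_eq_one_iff_of_norm_eq_one hnu hv.2).mp h3).symm
    have hnuQ : -u ∈ Q := by
      have := hall v₀ ⟨hv₀Q, hv₀S⟩
      rwa [← this]
    refine ⟨u, huPS, ?_⟩
    ext x
    constructor
    · intro hxQ
      by_cases hx0 : x = 0
      · exact ⟨0, le_rfl, by simp [hx0]⟩
      · have hxn : (0:ℝ) < ‖x‖ := norm_pos_iff.mpr hx0
        have hxs : ‖x‖⁻¹ • x ∈ Q := hQ.2.2 _ (le_of_lt (inv_pos.mpr hxn)) x hxQ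
        have hxu : ‖x‖⁻¹ • x ∈ sph n := by
          show ‖‖x‖⁻¹ • x‖ = 1
          rw [norm_smul, norm_inv, norm_norm, inv_mul_cancel₀ (ne_of_gt hxn)]
        refine ⟨‖x‖, le_of_lt hxn, ?_⟩
        rw [← hall _ ⟨hxs, hxu⟩, smul_smul, mul_inv_cancel₀ (ne_of_gt hxn), one_smul]
    · rintro ⟨α, hα, rfl⟩
      exact hQ.2.2 α hα _ hnuQ
  · rintro ⟨u, ⟨huP, huS⟩, rfl⟩
    have hQS : ({x | ∃ α : ℝ, 0 ≤ α ∧ x = α • (-u)} ∩ sph n) = {-u} := by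
      ext x
      constructor
      · rintro ⟨⟨α, hα, rfl⟩, hxs⟩
        have hx1 : ‖α • (-u)‖ = 1 := hxs
        rw [norm_smul, norm_neg, huS, mul_one, Real.norm_eq_abs, abs_of_nonneg hα] at hx1
        simp [hx1]
      · rintro rfl
        refine ⟨⟨1, zero_le_one, (one_smul ℝ _).symm⟩, ?_⟩
        show ‖(-u : E n)‖ = 1
        rw [norm_neg]; exact huS
    have hFu : ∀ w : E n, F {x | ∃ α : ℝ, 0 ≤ α ∧ x = α • (-u)} w = ⟪w, -u⟫ := by
      intro w
      rw [F, hQS, image_singleton, csSup_singleton]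
    have hm1 : F {x | ∃ α : ℝ, 0 ≤ α ∧ x = α • (-u)} u = -1 := by
      rw [hFu, inner_neg_right, real_inner_self_eq_norm_sq, huS]; norm_num
    apply le_antisymm
    · exact csInf_le ⟨-1, by rintro x ⟨w, hw, rfl⟩; exact hFlb w hw.2⟩
        ⟨u, ⟨huP, huS⟩, hm1⟩
    · exact le_csInf (hPne.image _) (by rintro x ⟨w, hw, rfl⟩; exact hFlb w hw.2)
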